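/- arXiv:2010.00147 — 2 statements merged into one kernel-verified Lean document; each statement's English description precedes it below -/
import Mathlib

section
/- The only neat families of unweighted graphs are the family of paths {P_n}_{n≥1} and the family of stars {S_n}_{n≥1}: any neat family {G_n}_{n≥1} of simple connected graphs with G_n on n vertices (each vertex of weight 1) satisfies either G_n ≅ P_n for all n or G_n ≅ S_n for all n. -/
open scoped BigOperators
open scoped Classical

namespace CSF

/-! ## Extended chromatic symmetric functions of multigraphs

A (multi)graph on a vertex type `V` is given by a multiset of edges `E : Multiset (Sym2 V)`
(loops and multiple edges allowed).  Colours are positive integers `ℕ+`, and the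
(extended) chromatic symmetric function lives in `MvPowerSeries ℕ+ ℚ`, the power series
in the commuting variables `x_j`, `j : ℕ+`. -/

/-- A proper colouring of the multigraph with edge multiset `E`. -/
def Proper {V C : Type*} (E : Multiset (Sym2 V)) (κ : V → C) : Prop :=
  ∀ u v : V, s(u, v) ∈ E → κ u ≠ κ v

/-- The monomial `∏_v x_{κ(v)}^{w(v)}`, recorded as its exponent vector. -/
noncomputable def mon {V : Type*} [Fintype V] (w : V → ℕ) (κ : V → ℕ+) : ℕ+ →₀ ℕ :=
  ∑ v, Finsupp.single (κ v) (w v)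

/-- The extended chromatic symmetric function `X_{(G,w)}` of the weighted graph with
edge multiset `E` and vertex weights `w`: the coefficient of a monomial `m` is the number
of proper colourings `κ` with `∏_v x_{κ(v)}^{w(v)} = x^m`. -/
noncomputable def X {V : Type*} [Fintype V] (E : Multiset (Sym2 V)) (w : V → ℕ) :
    MvPowerSeries ℕ+ ℚ :=
  fun m => (Nat.card {κ : V → ℕ+ // Proper E κ ∧ mon w κ = m} : ℚ)

/-- The chromatic polynomial `χ_G(k)`: the number of proper colourings with `k` colours. -/
noncomputable def chrom {V : Type*} [Fintype V] (E : Multiset (Sym2 V)) (k : ℕ) : ℕ :=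
  Nat.card {κ : V → Fin k // Proper E κ}

/-- Edge multiset of the labelled path `P_n` on `Fin n`: edges `v_i v_{i+1}`. -/
def pathE (n : ℕ) : Multiset (Sym2 (Fin n)) :=
  ((Finset.univ : Finset (Fin n × Fin n)).filter
    (fun p => (p.1 : ℕ) + 1 = (p.2 : ℕ))).val.map (fun p => s(p.1, p.2))

/-- Edge multiset of the labelled star `S_n` on `Fin n`: edges `v_i v_n`, `i ∈ [n-1]`. -/
def starE (n : ℕ) : Multiset (Sym2 (Fin n)) :=
  ((Finset.univ : Finset (Fin n × Fin n)).filter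
    (fun p => (p.1 : ℕ) + 1 < n ∧ (p.2 : ℕ) + 1 = n)).val.map (fun p => s(p.1, p.2))

/-- Edge multiset of a disjoint union of graphs on `Fin (m i)`, `i : Fin k`. -/
noncomputable def unionE {k : ℕ} {m : Fin k → ℕ}
    (Es : ∀ i, Multiset (Sym2 (Fin (m i)))) : Multiset (Sym2 (Σ i, Fin (m i))) :=
  ∑ i, (Es i).map (Sym2.map (fun v => ⟨i, v⟩))

/-- Extended chromatic symmetric function of a disjoint union of weighted graphs. -/
noncomputable def Xunion {k : ℕ} {m : Fin k → ℕ}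
    (Es : ∀ i, Multiset (Sym2 (Fin (m i)))) (ws : ∀ i, Fin (m i) → ℕ) :
    MvPowerSeries ℕ+ ℚ :=
  X (unionE Es) (fun v => ws v.1 v.2)

/-- `X_{P_l}`: chromatic symmetric function of the disjoint union of unweighted paths
`P_{l_1} ∪ ⋯ ∪ P_{l_k}`. -/
noncomputable def XPaths (l : List ℕ) : MvPowerSeries ℕ+ ℚ :=
  Xunion (m := fun i : Fin l.length => l.get i) (fun i => pathE (l.get i)) (fun _ _ => 1)

/-- `X_{S_l}`: chromatic symmetric function of a disjoint union of unweighted stars. -/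
noncomputable def XStars (l : List ℕ) : MvPowerSeries ℕ+ ℚ :=
  Xunion (m := fun i : Fin l.length => l.get i) (fun i => starE (l.get i)) (fun _ _ => 1)

/-- `X_{(P_{ℓ(α)}, α)}`: the extended chromatic symmetric function of the path on
`ℓ(α)` vertices whose `i`-th vertex has weight `α_i`. -/
noncomputable def Xwpath (α : List ℕ) : MvPowerSeries ℕ+ ℚ :=
  X (pathE α.length) (fun i => α.get i)

/-! ## Symmetric functions -/

/-- The power sum symmetric function `p_i = ∑_j x_j^i`. -/
noncomputable def pS (i : ℕ) : MvPowerSeries ℕ+ ℚ :=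
  fun m => if ∃ j : ℕ+, m = Finsupp.single j i then 1 else 0

/-- The complete homogeneous symmetric function `h_i`. -/
noncomputable def hS (i : ℕ) : MvPowerSeries ℕ+ ℚ :=
  fun m => if (m.sum fun _ k => k) = i then 1 else 0

/-- The elementary symmetric function `e_i`. -/
noncomputable def eS (i : ℕ) : MvPowerSeries ℕ+ ℚ :=
  fun m => if ((m.sum fun _ k => k) = i ∧ ∀ j, m j ≤ 1) then 1 else 0

/-- `p_λ = p_{λ_1} ⋯ p_{λ_k}`. -/
noncomputable def pProd (l : List ℕ) : MvPowerSeries ℕ+ ℚ := (l.map pS).prod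
/-- `h_λ = h_{λ_1} ⋯ h_{λ_k}`. -/
noncomputable def hProd (l : List ℕ) : MvPowerSeries ℕ+ ℚ := (l.map hS).prod
/-- `e_λ = e_{λ_1} ⋯ e_{λ_k}`. -/
noncomputable def eProd (l : List ℕ) : MvPowerSeries ℕ+ ℚ := (l.map eS).prod

/-- The algebra `Sym` of symmetric functions, realized as the subalgebra of
`MvPowerSeries ℕ+ ℚ` generated by the elementary symmetric functions. -/
noncomputable def SymAlg : Subalgebra ℚ (MvPowerSeries ℕ+ ℚ) :=
  Algebra.adjoin ℚ {f | ∃ i : ℕ, f = eS (i + 1)}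

/-- Sort a list into weakly decreasing order (the underlying partition `α̃`). -/
def sortDesc (l : List ℕ) : List ℕ := List.insertionSort (· ≥ ·) l

/-- Partitions: weakly decreasing lists of positive integers. -/
abbrev PartL : Type := {l : List ℕ // l.Pairwise (· ≥ ·) ∧ ∀ x ∈ l, 0 < x}

/-! ## Compositions -/

/-- All coarsenings of a composition: lists obtained by summing adjacent blocks. -/
def coarsenings : List ℕ → List (List ℕ)
  | [] => [[]]
  | a :: l =>
    (coarsenings l).map (fun β => a :: β) ++
      (coarsenings l).filterMap (fun β =>
        match β with
        | [] => none
        | b :: β' => some ((a + b) :: β'))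

/-- The ribbon Schur function `r_α = ∑_{β ≽ α} (-1)^{ℓ(α) - ℓ(β)} h_{β̃}`. -/
noncomputable def ribbon (α : List ℕ) : MvPowerSeries ℕ+ ℚ :=
  ((coarsenings α).map fun β =>
    ((-1 : ℚ) ^ (α.length - β.length)) • hProd (sortDesc β)).sum

lemma sum_take_get_le (α : List ℕ) (b : Fin α.length) :
    (α.take b).sum + α.get b ≤ α.sum := by
  have h1 : (α.take (b + 1)).sum = (α.take b).sum + α[b] := List.sum_take_succ α b b.isLt
  have h2 : (α.take (b + 1)).sum ≤ α.sum := by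
    conv_rhs => rw [← List.take_append_drop (b + 1) α]
    rw [List.sum_append]
    exact Nat.le_add_right _ _
  simpa [List.get_eq_getElem, ← h1] using h2

/-- Shift a graph on `Fin m` by an offset `o` inside `Fin n`. -/
def shiftE {m n : ℕ} (o : ℕ) (h : o + m ≤ n) (E : Multiset (Sym2 (Fin m))) :
    Multiset (Sym2 (Fin n)) :=
  E.map (Sym2.map (fun v : Fin m => (⟨o + (v : ℕ), by have := v.isLt; omega⟩ : Fin n)))

/-- The labelled graph `G_{α_1} | G_{α_2} | ⋯ | G_{α_k}` on `Fin (α₁ + ⋯ + α_k)`: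
consecutive blocks of vertices carry the graphs `Gr (α_i)`. -/
noncomputable def concatE (α : List ℕ) (Gr : (k : ℕ) → Multiset (Sym2 (Fin k))) :
    Multiset (Sym2 (Fin α.sum)) :=
  ∑ b : Fin α.length,
    shiftE ((α.take b).sum) (sum_take_get_le α b) (Gr (α.get b))

/-- `set(α) = {α_1, α_1+α_2, …, α_1+⋯+α_{ℓ(α)-1}} ⊆ [n-1]`. -/
def setC (α : List ℕ) : Finset ℕ :=
  ((List.range (α.length - 1)).map (fun j => (α.take (j + 1)).sum)).toFinset

/-- The labelled graph on `Fin n` whose edges are `v_i v_{i+1}` for `i ∈ S` (1-based). -/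
def edgesFromSet (n : ℕ) (S : Finset ℕ) : Multiset (Sym2 (Fin n)) :=
  ((Finset.univ : Finset (Fin n × Fin n)).filter
    (fun p => (p.1 : ℕ) + 1 = (p.2 : ℕ) ∧ (p.2 : ℕ) ∈ S)).val.map (fun p => s(p.1, p.2))

/-- `γ = α^c`, the complement composition: the composition of `|α|` with
`set(γ) = [n-1] − set(α)`. -/
def IsComplementOf (γ α : List ℕ) : Prop :=
  (∀ x ∈ γ, 0 < x) ∧ γ.sum = α.sum ∧ setC γ = Finset.Ioo 0 α.sum \ setC α

/-- Near concatenation `α ⊙ β` of compositions. -/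
def nconcat : List ℕ → List ℕ → List ℕ
  | [], β => β
  | [a], [] => [a]
  | [a], b :: β => (a + b) :: β
  | a :: l, β => a :: nconcat l β

/-- `β^{⊙ i}`, the `i`-fold near concatenation of `β` with itself. -/
def npowOdot (β : List ℕ) : ℕ → List ℕ
  | 0 => []
  | i + 1 => nconcat (npowOdot β i) β

/-- Composition of compositions: `α ∘ β = β^{⊙α_1} · ⋯ · β^{⊙α_{ℓ(α)}}`. -/
def compOp (α β : List ℕ) : List ℕ := (α.map (npowOdot β)).flatten

/-- The equivalence `α ∼ β`: `α` and `β` have `∘`-factorizations whose factors agree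
up to reversal.  (`[1]` is a two-sided identity for `∘`, so the empty fold is harmless.) -/
def simRel (α β : List ℕ) : Prop :=
  ∃ L M : List (List ℕ),
    List.Forall₂ (fun γ δ => (γ ≠ [] ∧ ∀ x ∈ γ, 0 < x) ∧ (δ = γ ∨ δ = γ.reverse)) L M ∧
    α = L.foldr compOp [1] ∧ β = M.foldr compOp [1]

/-- A trivial factorization `α = β ∘ γ`. -/
def TrivialFac (β γ : List ℕ) : Prop :=
  β = [1] ∨ γ = [1] ∨ (β.length = 1 ∧ γ.length = 1) ∨
    ((∀ x ∈ β, x = 1) ∧ ∀ x ∈ γ, x = 1)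

/-- `L` is an irreducible factorization of `α`. -/
def IsIrreducibleFac (α : List ℕ) (L : List (List ℕ)) : Prop :=
  (∀ γ ∈ L, γ ≠ [] ∧ ∀ x ∈ γ, 0 < x) ∧
  α = L.foldr compOp [1] ∧
  (∀ i : ℕ, ∀ h : i + 1 < L.length,
    ¬ TrivialFac (L.get ⟨i, by omega⟩) (L.get ⟨i + 1, h⟩)) ∧
  (∀ γ ∈ L, ∀ δ ε : List ℕ, δ ≠ [] → (∀ x ∈ δ, 0 < x) → ε ≠ [] → (∀ x ∈ ε, 0 < x) →
    γ = compOp δ ε → TrivialFac δ ε)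

/-- All compositions of `n` (lists of positive integers with sum `n`). -/
def comps : ℕ → List (List ℕ)
  | 0 => [[]]
  | n + 1 => (List.range (n + 1)).attach.flatMap fun j =>
      (comps j.1).map (fun c => (n + 1 - j.1) :: c)
  decreasing_by exact List.mem_range.mp j.2

/-- All refinements `α ≼ λ` of a composition `λ`. -/
def refinements : List ℕ → List (List ℕ)
  | [] => [[]]
  | a :: l => (comps a).flatMap fun c => (refinements l).map (fun r => c ++ r)

/-- All compositions `α ⊆ λ`: `ℓ(α) = ℓ(λ)` and `1 ≤ α_i ≤ λ_i`. -/
def boundedLists : List ℕ → List (List ℕ)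
  | [] => [[]]
  | a :: l => (List.range a).flatMap fun j => (boundedLists l).map (fun r => (j + 1) :: r)

/-! ## Expansions of weighted graphs -/

/-- Given a decomposition `L` of `β` witnessing `β ≼ α`, vertex `a` of `H` is in the block
`R(v_v)` (0-based `v`) when `a` lies among the consecutively labelled vertices of block `v`. -/
def inBlock (L : List (List ℕ)) (v a : ℕ) : Prop :=
  ((L.take v).map List.length).sum ≤ a ∧ a < ((L.take (v + 1)).map List.length).sum

/-- The relation `a R b`: `a` and `b` lie in a common block `R(v)`. -/
def Rrel (L : List (List ℕ)) (a b : ℕ) : Prop :=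
  ∃ v : ℕ, inBlock L v a ∧ inBlock L v b

/-! ## The lattice of contractions and its Möbius function -/

/-- The restriction of the graph `E` to `B` is connected. -/
def ConnOn {V : Type*} (E : Multiset (Sym2 V)) (B : Set V) : Prop :=
  ∀ a ∈ B, ∀ b ∈ B, Relation.ReflTransGen (fun x y => x ∈ B ∧ y ∈ B ∧ s(x, y) ∈ E) a b

/-- A connected set partition of the graph `E` (as a setoid on the vertices). -/
def ConnPart {V : Type*} (E : Multiset (Sym2 V)) (σ : Setoid V) : Prop :=
  ∀ v : V, ConnOn E {u | σ.r u v}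

/-- The lattice of contractions `L_G`: connected set partitions ordered by refinement. -/
def LContr {V : Type*} (E : Multiset (Sym2 V)) : Type _ := {σ : Setoid V // ConnPart E σ}

noncomputable instance setoidFintype {V : Type*} [Fintype V] : Fintype (Setoid V) :=
  Fintype.ofInjective (fun s : Setoid V => s.r)
    (fun s t h => by cases s; cases t; simp only at h; subst h; rfl)

noncomputable instance {V : Type*} [Fintype V] (E : Multiset (Sym2 V)) : Fintype (LContr E) :=
  letI := Classical.decPred (ConnPart E)
  Subtype.fintype _

instance {V : Type*} (E : Multiset (Sym2 V)) : PartialOrder (LContr E) :=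
  Subtype.partialOrder _

noncomputable instance {V : Type*} [Fintype V] (E : Multiset (Sym2 V)) :
    LocallyFiniteOrder (LContr E) :=
  letI := Classical.decRel (α := LContr E) (· < ·)
  letI := Classical.decRel (α := LContr E) (· ≤ ·)
  Fintype.toLocallyFiniteOrder

/-- The Möbius function of the lattice of contractions. -/
noncomputable def mobLC {V : Type*} [Fintype V] (E : Multiset (Sym2 V))
    (x y : LContr E) : ℚ :=
  letI := Classical.decEq (LContr E)
  IncidenceAlgebra.mu ℚ x y

/-- `p_{type(π,w)}`: the product over the blocks of `π` of `p_{(total weight of block)}`. -/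
noncomputable def ptype {V : Type*} [Fintype V] (σ : Setoid V) (w : V → ℕ) :
    MvPowerSeries ℕ+ ℚ :=
  letI := Classical.decEq (Quotient σ)
  letI := @Quotient.fintype V _ σ (Classical.decRel _)
  ∏ c : Quotient σ, pS (∑ v : V, if Quotient.mk σ v = c then w v else 0)

/-- `0̂`, the minimal element of the lattice of contractions: each vertex is its own block. -/
def botLC {V : Type*} (E : Multiset (Sym2 V)) : LContr E :=
  ⟨⊥, by
    intro v a ha b hb
    have ha' : a = v := ha
    have hb' : b = v := hb
    subst ha'; subst hb'; exact Relation.ReflTransGen.refl⟩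

/-! ## Composition of a composition with a weighted graph -/

section comp
variable {V : Type*} [Fintype V]

/-- The gluing relation: for `i ∈ S` (1-based), identify the vertex `z` of copy `i`
with the vertex `a` of copy `i + 1` (0-based copies `i - 1` and `i`). -/
def glueRel (a z : V) (n : ℕ) (S : Finset ℕ) : (Fin n × V) → (Fin n × V) → Prop :=
  fun x y => ∃ i ∈ S, ∃ (h1 : i - 1 < n) (h2 : i < n),
    x = (⟨i - 1, h1⟩, z) ∧ y = (⟨i, h2⟩, a)

def glueSetoid (a z : V) (n : ℕ) (S : Finset ℕ) : Setoid (Fin n × V) :=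
  Relation.EqvGen.setoid (glueRel a z n S)

/-- Vertices of the graph obtained from `n` copies of a graph on `V` by contracting the
connecting edges `z_i a_{i+1}`, `i ∈ S`. -/
def compV (a z : V) (n : ℕ) (S : Finset ℕ) : Type _ := Quotient (glueSetoid a z n S)

noncomputable instance (a z : V) (n : ℕ) (S : Finset ℕ) : Fintype (compV a z n S) :=
  @Quotient.fintype _ _ (glueSetoid a z n S) (Classical.decRel _)

/-- Edges: all edges of the `n` copies of `E`, together with the connecting edges
`z_i a_{i+1}` for `i ∈ [n-1] − S` (the ones not contracted). -/
noncomputable def compE (E : Multiset (Sym2 V)) (a z : V) (n : ℕ) (S : Finset ℕ) :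
    Multiset (Sym2 (compV a z n S)) :=
  (∑ i : Fin n, E.map (Sym2.map fun v =>
      (Quotient.mk (glueSetoid a z n S) (i, v) : compV a z n S)))
  + ((Finset.Ioo 0 n \ S).attach.val.map fun i =>
      s((Quotient.mk (glueSetoid a z n S)
          (⟨i.1 - 1, by
            have := i.2; simp only [Finset.mem_sdiff, Finset.mem_Ioo] at this; omega⟩, z) :
            compV a z n S),
        (Quotient.mk (glueSetoid a z n S)
          (⟨i.1, by
            have := i.2; simp only [Finset.mem_sdiff, Finset.mem_Ioo] at this; omega⟩, a) :
            compV a z n S)))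

/-- Weights: a contracted vertex receives the sum of the weights of its constituents. -/
noncomputable def compW (w : V → ℕ) (a z : V) (n : ℕ) (S : Finset ℕ) :
    compV a z n S → ℕ :=
  fun c => ∑ x : Fin n × V,
    if (Quotient.mk (glueSetoid a z n S) x : compV a z n S) = c then w x.2 else 0

/-- `X_{α ∘ (G,w)}`: take `|α|` copies of `(G,w)`, join successive copies by edges
`z_i a_{i+1}`, and contract exactly the connecting edges with `i ∈ set(α^c)`. -/
noncomputable def Xcomp (E : Multiset (Sym2 V)) (w : V → ℕ) (a z : V) (α : List ℕ) :
    MvPowerSeries ℕ+ ℚ :=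
  X (compE E a z α.sum (Finset.Ioo 0 α.sum \ setC α))
    (compW w a z α.sum (Finset.Ioo 0 α.sum \ setC α))

end comp

/-! Deleting an edge of the connected graph `G_n` leaves a graph `G_λ` with at most two
components, and with at least two, since it has fewer edges than `G_{(n)} = G_n`. So every edge of
`G_n` is a bridge joining copies of `G_a` and `G_b` with `a + b = n`. Likewise, deleting all
edges outside a connected subgraph on `k` vertices shows that this subgraph is a copy of `G_k`.

If some `G_n` contains a claw `K_{1,3}`, then `G_4` is the claw, so no `G_n` contains a path on
four vertices; inducting along the bridge decomposition, a star joined by a bridge to a star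
without creating such a path is a star. Otherwise no `G_n` contains a claw, and a path joined by
a bridge to a path without creating a claw is a path. -/

variable {α β V : Type*}

def Reach (E : Multiset (Sym2 V)) : V → V → Prop :=
  Relation.ReflTransGen (fun x y => s(x, y) ∈ E)

namespace Reach

variable {E E' : Multiset (Sym2 V)} {u v w : V}

lemma symm (h : Reach E u v) : Reach E v u := by
  induction h with
  | refl => exact Relation.ReflTransGen.refl
  | tail _ hxy ih => exact Relation.ReflTransGen.head (Sym2.eq_swap ▸ hxy) ih

lemma trans (h₁ : Reach E u v) (h₂ : Reach E v w) : Reach E u w :=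
  Relation.ReflTransGen.trans h₁ h₂

lemma of_mem (h : s(u, v) ∈ E) : Reach E u v := Relation.ReflTransGen.single h

lemma mono (hE : E ⊆ E') (h : Reach E u v) : Reach E' u v :=
  Relation.ReflTransGen.mono (fun _ _ hxy => hE hxy) _ _ h

lemma map (f : V → α) (h : Reach E u v) : Reach (E.map (Sym2.map f)) (f u) (f v) :=
  Relation.ReflTransGen.lift f (fun x y hxy => by
    simpa using Multiset.mem_map_of_mem (Sym2.map f) hxy) _ _ h

lemma exists_mem_of_ne (h : Reach E u v) (huv : u ≠ v) : ∃ w, s(u, w) ∈ E := by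
  induction h using Relation.ReflTransGen.head_induction_on with
  | refl => exact absurd rfl huv
  | head hxy _ _ => exact ⟨_, hxy⟩

lemma exists_eq_of_map {B : Multiset (Sym2 α)} {f : α → V} {x : α}
    (h : Reach (B.map (Sym2.map f)) (f x) w) : ∃ y, f y = w := by
  induction h with
  | refl => exact ⟨x, rfl⟩
  | tail _ hyz ih =>
    obtain ⟨y, rfl⟩ := ih
    obtain ⟨e, -, he⟩ := Multiset.mem_map.1 hyz
    induction e using Sym2.ind with
    | h a b =>
      rw [Sym2.map_mk, Sym2.eq_iff] at he
      rcases he with ⟨-, rfl⟩ | ⟨rfl, -⟩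
      exacts [⟨b, rfl⟩, ⟨a, rfl⟩]

lemma sub_singleton_or [DecidableEq V] {x y : V} (h : Reach E v x) :
    Reach (E - {s(x, y)}) v x ∨ Reach (E - {s(x, y)}) v y := by
  induction h using Relation.ReflTransGen.head_induction_on with
  | refl => exact Or.inl Relation.ReflTransGen.refl
  | @head a c hac _ ih =>
    by_cases he : s(a, c) = s(x, y)
    · rcases Sym2.eq_iff.1 he with ⟨rfl, -⟩ | ⟨rfl, -⟩
      exacts [Or.inl Relation.ReflTransGen.refl, Or.inr Relation.ReflTransGen.refl]
    · have hac' : s(a, c) ∈ E - {s(x, y)} := by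
        rwa [Multiset.sub_singleton, Multiset.mem_erase_of_ne he]
      exact ih.imp (Relation.ReflTransGen.head hac') (Relation.ReflTransGen.head hac')

end Reach

lemma reach_map_equiv_iff (σ : α ≃ V) {A : Multiset (Sym2 α)} {x y : α} :
    Reach (A.map (Sym2.map σ)) (σ x) (σ y) ↔ Reach A x y := by
  refine ⟨fun h => ?_, Reach.map σ⟩
  have h' := h.map σ.symm
  rwa [Multiset.map_map, ← Sym2.map_comp, σ.symm_comp_self, Sym2.map_id, Multiset.map_id,
    σ.symm_apply_apply, σ.symm_apply_apply] at h'

lemma map_map_sym2 {γ : Type*} (f : α → β) (g : β → γ) (A : Multiset (Sym2 α)) :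
    (A.map (Sym2.map f)).map (Sym2.map g) = A.map (Sym2.map (g ∘ f)) := by
  rw [Multiset.map_map, ← Sym2.map_comp]

lemma mem_map_sym2_mk_iff {A : Multiset (Sym2 α)} {f : α → β} (hf : Function.Injective f)
    {x y : α} : s(f x, f y) ∈ A.map (Sym2.map f) ↔ s(x, y) ∈ A := by
  rw [← Sym2.map_mk, Multiset.mem_map_of_injective (Sym2.map.injective hf)]

lemma map_sym2_eq_of_mem_iff {A : Multiset (Sym2 α)} {B : Multiset (Sym2 β)} (σ : α ≃ β)
    (hA : A.Nodup) (hB : B.Nodup) (h : ∀ x y, s(x, y) ∈ A ↔ s(σ x, σ y) ∈ B) :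
    A.map (Sym2.map σ) = B := by
  refine (hA.map (Sym2.map.injective σ.injective)).ext hB |>.2 fun e => ?_
  induction e using Sym2.ind with
  | h x y =>
    obtain ⟨x, rfl⟩ := σ.surjective x
    obtain ⟨y, rfl⟩ := σ.surjective y
    rw [← h, ← Multiset.mem_map_of_injective (Sym2.map.injective σ.injective), Sym2.map_mk]

def EdgeIso (A : Multiset (Sym2 α)) (B : Multiset (Sym2 β)) : Prop :=
  ∃ σ : α ≃ β, A.map (Sym2.map σ) = B

namespace EdgeIso

variable {γ : Type*} {A : Multiset (Sym2 α)} {B : Multiset (Sym2 β)} {C : Multiset (Sym2 γ)}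

@[refl] lemma refl (A : Multiset (Sym2 α)) : EdgeIso A A :=
  ⟨Equiv.refl α, by simp⟩

lemma symm (h : EdgeIso A B) : EdgeIso B A := by
  obtain ⟨σ, rfl⟩ := h
  exact ⟨σ.symm, by rw [map_map_sym2, σ.symm_comp_self, Sym2.map_id, Multiset.map_id]⟩

lemma trans (h₁ : EdgeIso A B) (h₂ : EdgeIso B C) : EdgeIso A C := by
  obtain ⟨σ, rfl⟩ := h₁
  obtain ⟨τ, rfl⟩ := h₂
  exact ⟨σ.trans τ, by rw [map_map_sym2]; rfl⟩

lemma exists_forall_mem (h : EdgeIso A B) {c : β} (hc : ∀ e ∈ B, c ∈ e) :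
    ∃ c' : α, ∀ e ∈ A, c' ∈ e := by
  obtain ⟨σ, rfl⟩ := h
  refine ⟨σ.symm c, fun e he => ?_⟩
  obtain ⟨x, hx, hxc⟩ := Sym2.mem_map.1 (hc _ (Multiset.mem_map_of_mem _ he))
  rwa [← hxc, σ.symm_apply_apply]

end EdgeIso

def Embeds (B : Multiset (Sym2 α)) (E : Multiset (Sym2 β)) : Prop :=
  ∃ f : α ↪ β, B.map (Sym2.map f) ≤ E

lemma Embeds.edgeIso {γ : Type*} {A : Multiset (Sym2 α)} {B : Multiset (Sym2 β)}
    {C : Multiset (Sym2 γ)} (h : Embeds C A) (hAB : EdgeIso A B) : Embeds C B := by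
  obtain ⟨f, hf⟩ := h
  obtain ⟨σ, rfl⟩ := hAB
  refine ⟨f.trans σ.toEmbedding, ?_⟩
  exact (map_map_sym2 f σ C).symm ▸ Multiset.map_le_map hf

lemma embeds_of_forall_mem {A : Multiset (Sym2 α)} {E : Multiset (Sym2 β)} (f : α ↪ β)
    (hA : A.Nodup) (h : ∀ e ∈ A, Sym2.map f e ∈ E) : Embeds A E :=
  ⟨f, (Multiset.le_iff_subset (hA.map (Sym2.map.injective f.injective))).2 fun _ hx => by
    obtain ⟨e, he, rfl⟩ := Multiset.mem_map.1 hx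
    exact h e he⟩

lemma mem_iff_of_forall_mem_of_reach {E : Multiset (Sym2 V)} (hloop : ∀ e ∈ E, ¬ e.IsDiag)
    (hconn : ∀ x y, Reach E x y) {c : V} (hc : ∀ e ∈ E, c ∈ e) (x y : V) :
    s(x, y) ∈ E ↔ x ≠ y ∧ (x = c ∨ y = c) := by
  have hpend : ∀ z, z ≠ c → s(z, c) ∈ E := fun z hz => by
    obtain ⟨w, hw⟩ := (hconn z c).exists_mem_of_ne hz
    rcases Sym2.mem_iff.1 (hc _ hw) with rfl | rfl
    exacts [absurd rfl hz, hw]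
  refine ⟨fun h => ⟨fun hxy => hloop _ h (Sym2.mk_isDiag_iff.2 hxy), ?_⟩, ?_⟩
  · exact (Sym2.mem_iff.1 (hc _ h)).imp Eq.symm Eq.symm
  · rintro ⟨hxy, rfl | rfl⟩
    · exact Sym2.eq_swap ▸ hpend y (Ne.symm hxy)
    · exact hpend x hxy

section pathStar

variable {n : ℕ}

lemma mem_pathE_iff {x y : Fin n} :
    s(x, y) ∈ pathE n ↔ (x : ℕ) + 1 = y ∨ (y : ℕ) + 1 = x := by
  simp only [pathE, Finset.filter_val, Multiset.mem_map, Multiset.mem_filter, Finset.mem_val,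
    Finset.mem_univ, true_and, Sym2.eq, Sym2.rel_iff', Prod.swap_prod_mk, Prod.exists,
    Prod.mk.injEq]
  constructor
  · rintro ⟨a, b, h, ⟨rfl, rfl⟩ | ⟨rfl, rfl⟩⟩ <;> simp [h]
  · rintro (h | h)
    exacts [⟨x, y, h, Or.inl ⟨rfl, rfl⟩⟩, ⟨y, x, h, Or.inr ⟨rfl, rfl⟩⟩]

lemma mem_starE_iff {x y : Fin n} :
    s(x, y) ∈ starE n ↔ x ≠ y ∧ ((x : ℕ) + 1 = n ∨ (y : ℕ) + 1 = n) := by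
  simp only [starE, Finset.filter_val, Multiset.mem_map, Multiset.mem_filter, Finset.mem_val,
    Finset.mem_univ, true_and, Sym2.eq, Sym2.rel_iff', Prod.swap_prod_mk, Prod.exists,
    Prod.mk.injEq, Fin.ext_iff, ne_eq]
  constructor
  · rintro ⟨a, b, h, h' | h'⟩ <;> omega
  · rintro ⟨hxy, h | h⟩
    · exact ⟨y, x, by omega, Or.inr ⟨rfl, rfl⟩⟩
    · exact ⟨x, y, by omega, Or.inl ⟨rfl, rfl⟩⟩

lemma nodup_pathE : (pathE n).Nodup := by
  refine (Finset.filter _ _).nodup.map_on fun p hp q hq hpq => ?_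
  simp only [Finset.mem_val, Finset.mem_filter] at hp hq
  rcases Sym2.eq_iff.1 hpq with ⟨h₁, h₂⟩ | ⟨h₁, h₂⟩
  · exact Prod.ext h₁ h₂
  · rw [h₁, h₂] at hp
    omega

lemma nodup_starE : (starE n).Nodup := by
  refine (Finset.filter _ _).nodup.map_on fun p hp q hq hpq => ?_
  simp only [Finset.mem_val, Finset.mem_filter] at hp hq
  rcases Sym2.eq_iff.1 hpq with ⟨h₁, h₂⟩ | ⟨h₁, h₂⟩
  · exact Prod.ext h₁ h₂
  · rw [h₁, h₂] at hp
    omega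

lemma not_isDiag_of_mem_starE : ∀ e ∈ starE n, ¬ e.IsDiag := by
  rintro ⟨x, y⟩ he
  exact Sym2.mk_isDiag_iff.not.2 (mem_starE_iff.1 he).1

lemma reach_pathE (x y : Fin n) : Reach (pathE n) x y := by
  have h₀ : ∀ (i : ℕ) (hi : i < n), Reach (pathE n) ⟨0, by omega⟩ ⟨i, hi⟩ := by
    intro i hi
    induction i with
    | zero => exact Relation.ReflTransGen.refl
    | succ i ih => exact (ih (by omega)).trans (Reach.of_mem (mem_pathE_iff.2 (Or.inl rfl)))
  exact (h₀ x x.2).symm.trans (h₀ y y.2)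

lemma reach_starE (x y : Fin n) : Reach (starE n) x y := by
  have hn := x.pos
  set last : Fin n := ⟨n - 1, by omega⟩
  have h₀ : ∀ z, Reach (starE n) z last := fun z => by
    by_cases hz : z = last
    · exact hz ▸ Relation.ReflTransGen.refl
    · exact Reach.of_mem (mem_starE_iff.2 ⟨hz, Or.inr (Nat.sub_add_cancel hn)⟩)
  exact (h₀ x).trans (h₀ y).symm

lemma pathE_one : pathE 1 = 0 := by decide

lemma starE_one : starE 1 = 0 := by decide

lemma pathE_map_revPerm : (pathE n).map (Sym2.map Fin.revPerm) = pathE n :=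
  map_sym2_eq_of_mem_iff _ nodup_pathE nodup_pathE fun x y => by
    simp only [mem_pathE_iff, Fin.revPerm_apply, Fin.val_rev]
    omega

lemma edgeIso_starE_of_forall_mem [Fintype V] {E : Multiset (Sym2 V)} (hE : E.Nodup)
    (hloop : ∀ e ∈ E, ¬ e.IsDiag) (hconn : ∀ x y, Reach E x y) {c : V} (hc : ∀ e ∈ E, c ∈ e) :
    EdgeIso E (starE (Fintype.card V)) := by
  have hV := Fintype.card_pos_iff.2 ⟨c⟩
  set last : Fin (Fintype.card V) := ⟨Fintype.card V - 1, by omega⟩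
  let σ := (Fintype.equivFin V).trans (Equiv.swap (Fintype.equivFin V c) last)
  have hlast : ∀ z, (σ z : ℕ) + 1 = Fintype.card V ↔ z = c := fun z => by
    rw [← σ.injective.eq_iff, show σ c = last by simp [σ], Fin.ext_iff]
    have := (σ z).isLt
    simp only [last]
    omega
  refine ⟨σ, map_sym2_eq_of_mem_iff σ hE nodup_starE fun x y => ?_⟩
  rw [mem_iff_of_forall_mem_of_reach hloop hconn hc, mem_starE_iff, hlast, hlast,
    σ.injective.ne_iff]

lemma injective_vecFour {p q r t : V} (hpq : p ≠ q) (hpr : p ≠ r) (hpt : p ≠ t) (hqr : q ≠ r)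
    (hqt : q ≠ t) (hrt : r ≠ t) : Function.Injective ![p, q, r, t] := by
  intro i j h
  fin_cases i <;> fin_cases j <;> simp_all [eq_comm]

lemma embeds_pathE_four {E : Multiset (Sym2 V)} {p q r t : V} (hpq : p ≠ q) (hpr : p ≠ r)
    (hpt : p ≠ t) (hqr : q ≠ r) (hqt : q ≠ t) (hrt : r ≠ t)
    (h₁ : s(p, q) ∈ E) (h₂ : s(q, r) ∈ E) (h₃ : s(r, t) ∈ E) : Embeds (pathE 4) E := by
  refine embeds_of_forall_mem ⟨_, injective_vecFour hpq hpr hpt hqr hqt hrt⟩ nodup_pathE ?_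
  rw [show pathE 4 = {s(0, 1), s(1, 2), s(2, 3)} by decide]
  simp [h₁, h₂, h₃]

lemma embeds_starE_four {E : Multiset (Sym2 V)} {p q r t : V} (hpq : p ≠ q) (hpr : p ≠ r)
    (hpt : p ≠ t) (hqr : q ≠ r) (hqt : q ≠ t) (hrt : r ≠ t)
    (h₁ : s(p, t) ∈ E) (h₂ : s(q, t) ∈ E) (h₃ : s(r, t) ∈ E) : Embeds (starE 4) E := by
  refine embeds_of_forall_mem ⟨_, injective_vecFour hpq hpr hpt hqr hqt hrt⟩ nodup_starE ?_
  rw [show starE 4 = {s(0, 3), s(1, 3), s(2, 3)} by decide]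
  simp [h₁, h₂, h₃]

lemma not_edgeIso_pathE_starE_four : ¬ EdgeIso (pathE 4) (starE 4) := fun h => by
  obtain ⟨c, hc⟩ := h.exists_forall_mem (c := 3) (by decide)
  revert c
  decide

end pathStar

def bridgeE (A : Multiset (Sym2 α)) (B : Multiset (Sym2 β)) (u : α) (v : β) :
    Multiset (Sym2 (α ⊕ β)) :=
  A.map (Sym2.map Sum.inl) + B.map (Sym2.map Sum.inr) + {s(Sum.inl u, Sum.inr v)}

section bridgeE

open Sum

variable {α' β' : Type*} {A : Multiset (Sym2 α)} {B : Multiset (Sym2 β)} {u : α} {v : β}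

@[simp] lemma mem_bridgeE_inl_inl {x y : α} : s(inl x, inl y) ∈ bridgeE A B u v ↔ s(x, y) ∈ A := by
  simp [bridgeE, mem_map_sym2_mk_iff inl_injective, Multiset.mem_map, Sym2.exists]

@[simp] lemma mem_bridgeE_inr_inr {x y : β} : s(inr x, inr y) ∈ bridgeE A B u v ↔ s(x, y) ∈ B := by
  simp [bridgeE, mem_map_sym2_mk_iff inr_injective, Multiset.mem_map, Sym2.exists]

@[simp] lemma mem_bridgeE_inl_inr {x : α} {y : β} :
    s(inl x, inr y) ∈ bridgeE A B u v ↔ x = u ∧ y = v := by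
  simp [bridgeE, Multiset.mem_map, Sym2.exists]

@[simp] lemma mem_bridgeE_inr_inl {x : α} {y : β} :
    s(inr y, inl x) ∈ bridgeE A B u v ↔ x = u ∧ y = v := by
  rw [Sym2.eq_swap, mem_bridgeE_inl_inr]

lemma nodup_bridgeE (hA : A.Nodup) (hB : B.Nodup) : (bridgeE A B u v).Nodup := by
  refine Multiset.nodup_add.2 ⟨Multiset.nodup_add.2 ⟨hA.map (Sym2.map.injective inl_injective),
    hB.map (Sym2.map.injective inr_injective), Multiset.disjoint_left.2 fun he he' => ?_⟩,
    Multiset.nodup_singleton _, Multiset.disjoint_right.2 fun he he' => ?_⟩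
  · obtain ⟨e, -, rfl⟩ := Multiset.mem_map.1 he
    induction e using Sym2.ind
    simp [Multiset.mem_map, Sym2.exists] at he'
  · rw [Multiset.mem_singleton] at he
    subst he
    simp [Multiset.mem_map, Sym2.exists] at he'

lemma not_isDiag_of_mem_bridgeE (hA : ∀ e ∈ A, ¬ e.IsDiag) (hB : ∀ e ∈ B, ¬ e.IsDiag) :
    ∀ e ∈ bridgeE A B u v, ¬ e.IsDiag := by
  rintro ⟨x | x, y | y⟩ he <;> rw [Sym2.mk_isDiag_iff]
  · exact fun h => hA _ (mem_bridgeE_inl_inl.1 he) (by rw [inl_injective h]; rfl)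
  · exact inl_ne_inr
  · exact inr_ne_inl
  · exact fun h => hB _ (mem_bridgeE_inr_inr.1 he) (by rw [inr_injective h]; rfl)

lemma reach_bridgeE (hA : ∀ x y, Reach A x y) (hB : ∀ x y, Reach B x y) (p q : α ⊕ β) :
    Reach (bridgeE A B u v) p q := by
  have hsub : ∀ {z : α ⊕ β}, Reach (bridgeE A B u v) z (inl u) := by
    rintro (x | y)
    · exact ((hA x u).map inl).mono (Multiset.subset_of_le (by simp [bridgeE, add_assoc]))
    · exact (((hB y v).map inr).mono
        (Multiset.subset_of_le (by simp [bridgeE, add_right_comm]))).trans (Reach.of_mem (by simp))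
  exact hsub.trans hsub.symm

lemma map_bridgeE (σ : α → α') (τ : β → β') :
    (bridgeE A B u v).map (Sym2.map (Sum.map σ τ)) =
      bridgeE (A.map (Sym2.map σ)) (B.map (Sym2.map τ)) (σ u) (τ v) := by
  simp only [bridgeE, Multiset.map_add, map_map_sym2, Multiset.map_singleton, Sym2.map_mk]
  rfl

lemma edgeIso_bridgeE {A' : Multiset (Sym2 α')} {B' : Multiset (Sym2 β')} {σ : α ≃ α'}
    {τ : β ≃ β'} (hσ : A.map (Sym2.map σ) = A') (hτ : B.map (Sym2.map τ) = B') :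
    EdgeIso (bridgeE A B u v) (bridgeE A' B' (σ u) (τ v)) :=
  ⟨Equiv.sumCongr σ τ, by
    rw [← hσ, ← hτ, ← map_bridgeE]
    rfl⟩

lemma edgeIso_bridgeE_comm : EdgeIso (bridgeE A B u v) (bridgeE B A v u) := by
  refine ⟨Equiv.sumComm α β, ?_⟩
  simp only [bridgeE, Multiset.map_add, map_map_sym2, Multiset.map_singleton, Sym2.map_mk]
  rw [add_comm (Multiset.map _ A)]
  exact congrArg₂ _ rfl (congrArg _ Sym2.eq_swap)

end bridgeE

section bridgeEPathStar

open Sum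

variable {a b : ℕ}

lemma edgeIso_bridgeE_pathE {u : Fin a} {v : Fin b} (hu : (u : ℕ) + 1 = a) (hv : (v : ℕ) = 0) :
    EdgeIso (bridgeE (pathE a) (pathE b) u v) (pathE (a + b)) := by
  refine ⟨finSumFinEquiv, map_sym2_eq_of_mem_iff _ (nodup_bridgeE nodup_pathE nodup_pathE)
    nodup_pathE ?_⟩
  rintro (x | x) (y | y) <;>
    simp only [mem_bridgeE_inl_inl, mem_bridgeE_inr_inr, mem_bridgeE_inl_inr, mem_bridgeE_inr_inl,
      mem_pathE_iff, finSumFinEquiv_apply_left, finSumFinEquiv_apply_right, Fin.val_castAdd,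
      Fin.val_natAdd, Fin.ext_iff] <;> omega

lemma embeds_starE_four_bridgeE_pathE {B : Multiset (Sym2 β)} {u : Fin a} {v : β}
    (h₀ : 0 < (u : ℕ)) (h₁ : (u : ℕ) + 1 < a) : Embeds (starE 4) (bridgeE (pathE a) B u v) := by
  refine embeds_starE_four (p := inl ⟨u - 1, by omega⟩) (q := inl ⟨u + 1, h₁⟩) (r := inr v)
    (t := inl u) ?_ (by simp) ?_ (by simp) ?_ (by simp) ?_ ?_ (by simp)
  all_goals simp only [ne_eq, inl.injEq, Fin.ext_iff, mem_bridgeE_inl_inl, mem_pathE_iff, or_true]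
  all_goals omega

lemma exists_perm_pathE {u w : Fin a} (hu : (u : ℕ) = 0 ∨ (u : ℕ) + 1 = a)
    (hw : (w : ℕ) = 0 ∨ (w : ℕ) + 1 = a) :
    ∃ σ : Equiv.Perm (Fin a), (pathE a).map (Sym2.map σ) = pathE a ∧ σ u = w := by
  by_cases huw : u = w
  · exact ⟨1, by simp, huw⟩
  · refine ⟨Fin.revPerm, pathE_map_revPerm, Fin.ext ?_⟩
    rw [Fin.ext_iff] at huw
    simp only [Fin.revPerm_apply, Fin.val_rev]
    omega

lemma edgeIso_bridgeE_pathE_of_not_embeds {u : Fin a} {v : Fin b}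
    (h : ¬ Embeds (starE 4) (bridgeE (pathE a) (pathE b) u v)) :
    EdgeIso (bridgeE (pathE a) (pathE b) u v) (pathE (a + b)) := by
  have hu : (u : ℕ) = 0 ∨ (u : ℕ) + 1 = a := by
    by_contra hu
    exact h (embeds_starE_four_bridgeE_pathE (by omega) (by omega))
  have hv : (v : ℕ) = 0 ∨ (v : ℕ) + 1 = b := by
    by_contra hv
    exact h ((embeds_starE_four_bridgeE_pathE (by omega) (by omega)).edgeIso edgeIso_bridgeE_comm)
  obtain ⟨σ, hσ, hσu⟩ := exists_perm_pathE (w := ⟨a - 1, by omega⟩) hu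
    (Or.inr (show a - 1 + 1 = a by omega))
  obtain ⟨τ, hτ, hτv⟩ := exists_perm_pathE (w := ⟨0, by omega⟩) hv (Or.inl rfl)
  exact (edgeIso_bridgeE hσ hτ).trans
    (edgeIso_bridgeE_pathE (by rw [hσu]; show a - 1 + 1 = a; omega) (by rw [hτv]))

lemma exists_adj_starE {k : ℕ} (hk : 2 ≤ k) (w : Fin k) : ∃ p, p ≠ w ∧ s(p, w) ∈ starE k := by
  by_cases hw : (w : ℕ) + 1 = k
  · have hne : (⟨0, by omega⟩ : Fin k) ≠ w := Fin.ne_of_val_ne (show 0 ≠ (w : ℕ) by omega)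
    exact ⟨_, hne, mem_starE_iff.2 ⟨hne, Or.inr hw⟩⟩
  · have hne : (⟨k - 1, by omega⟩ : Fin k) ≠ w := Fin.ne_of_val_ne (show k - 1 ≠ (w : ℕ) by omega)
    exact ⟨_, hne, mem_starE_iff.2 ⟨hne, Or.inl (show k - 1 + 1 = k by omega)⟩⟩

lemma forall_mem_starE_or_exists (u : Fin a) : (∀ e ∈ starE a, u ∈ e) ∨
    ∃ c w, u ≠ c ∧ u ≠ w ∧ c ≠ w ∧ s(u, c) ∈ starE a ∧ s(c, w) ∈ starE a := by
  refine or_iff_not_imp_left.2 fun h => ?_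
  obtain ⟨⟨x, y⟩, he, hu⟩ := not_forall₂.1 h
  rw [mem_starE_iff] at he
  simp only [Sym2.mem_iff, not_or] at hu
  rcases he with ⟨hxy, hx | hy⟩
  · exact ⟨x, y, hu.1, hu.2, hxy, mem_starE_iff.2 ⟨hu.1, Or.inr hx⟩,
      mem_starE_iff.2 ⟨hxy, Or.inl hx⟩⟩
  · exact ⟨y, x, hu.2, hu.1, hxy.symm, mem_starE_iff.2 ⟨hu.2, Or.inr hy⟩,
      mem_starE_iff.2 ⟨hxy.symm, Or.inl hy⟩⟩

lemma edgeIso_bridgeE_starE_of_not_embeds (ha : 0 < a) (hb : 0 < b) {u : Fin a} {v : Fin b}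
    (h : ¬ Embeds (pathE 4) (bridgeE (starE a) (starE b) u v)) :
    EdgeIso (bridgeE (starE a) (starE b) u v) (starE (a + b)) := by
  wlog hba : b ≤ a generalizing a b u v
  · rw [add_comm]
    exact edgeIso_bridgeE_comm.trans
      (this hb ha (fun h' => h (h'.edgeIso edgeIso_bridgeE_comm)) (by omega))
  obtain ⟨c, hc⟩ : ∃ c, ∀ e ∈ bridgeE (starE a) (starE b) u v, c ∈ e := by
    obtain rfl | hb : b = 1 ∨ 2 ≤ b := by omega
    · rcases forall_mem_starE_or_exists u with hu | ⟨c, w, huc, huw, hcw, huc', hcw'⟩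
      · refine ⟨inl u, ?_⟩
        rintro ⟨x | x, y | y⟩ he
        · simpa using hu _ (mem_bridgeE_inl_inl.1 he)
        · simp [(mem_bridgeE_inl_inr.1 he).1]
        · simp [(mem_bridgeE_inr_inl.1 he).1]
        · simp [starE_one] at he
      · exact absurd (embeds_pathE_four (p := inr v) (q := inl u) (r := inl c) (t := inl w)
          (by simp) (by simp) (by simp) (by simpa) (by simpa) (by simpa) (by simp)
          (by simpa) (by simpa)) h
    · obtain ⟨p, hpu, hp⟩ := exists_adj_starE (by omega) u
      obtain ⟨q, hqv, hq⟩ := exists_adj_starE hb v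
      exact absurd (embeds_pathE_four (p := inl p) (q := inl u) (r := inr v) (t := inr q)
        (by simpa) (by simp) (by simp) (by simp) (by simp) (by simpa using hqv.symm)
        (by simpa) (by simp) (by simpa [Sym2.eq_swap] using hq)) h
  have := edgeIso_starE_of_forall_mem (nodup_bridgeE nodup_starE nodup_starE)
    (not_isDiag_of_mem_bridgeE not_isDiag_of_mem_starE not_isDiag_of_mem_starE)
    (reach_bridgeE reach_starE reach_starE) hc
  rwa [Fintype.card_sum, Fintype.card_fin, Fintype.card_fin] at this

end bridgeEPathStar

section unionE

variable {k : ℕ} {m : Fin k → ℕ} {Es : ∀ i, Multiset (Sym2 (Fin (m i)))}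

lemma mem_unionE {z : Sym2 (Σ i, Fin (m i))} :
    z ∈ unionE Es ↔ ∃ i, ∃ e ∈ Es i, Sym2.map (Sigma.mk i) e = z := by
  simp [unionE, Multiset.mem_sum, Multiset.mem_map]

lemma card_unionE : Multiset.card (unionE Es) = ∑ i, Multiset.card (Es i) := by
  simp [unionE, Multiset.card_sum]

lemma fst_eq_of_mem_unionE {z : Sym2 (Σ i, Fin (m i))} (hz : z ∈ unionE Es) {p q}
    (hp : p ∈ z) (hq : q ∈ z) : p.1 = q.1 := by
  obtain ⟨i, e, -, rfl⟩ := mem_unionE.1 hz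
  obtain ⟨a, -, rfl⟩ := Sym2.mem_map.1 hp
  obtain ⟨b, -, rfl⟩ := Sym2.mem_map.1 hq
  rfl

lemma reach_unionE_iff (hEs : ∀ i x y, Reach (Es i) x y) {p q : Σ i, Fin (m i)} :
    Reach (unionE Es) p q ↔ p.1 = q.1 := by
  refine ⟨fun h => ?_, fun h => ?_⟩
  · induction h with
    | refl => rfl
    | tail _ hqr ih => exact ih.trans (fst_eq_of_mem_unionE hqr (Sym2.mem_mk_left _ _)
        (Sym2.mem_mk_right _ _))
  · obtain ⟨i, x⟩ := p
    obtain ⟨j, y⟩ := q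
    obtain rfl : i = j := h
    exact ((hEs i x y).map (Sigma.mk i)).mono fun z hz => mem_unionE.2 <| by
      obtain ⟨e, he, rfl⟩ := Multiset.mem_map.1 hz
      exact ⟨i, e, he, rfl⟩

lemma reach_iff_of_map_eq_unionE {F : Multiset (Sym2 V)} (φ : V ≃ Σ i, Fin (m i))
    (hφ : F.map (Sym2.map φ) = unionE Es) (hEs : ∀ i x y, Reach (Es i) x y) {x y : V} :
    Reach F x y ↔ (φ x).1 = (φ y).1 := by
  rw [← reach_map_equiv_iff φ, hφ, reach_unionE_iff hEs]

lemma unionE_eq_map_of_forall_fst_eq (i : Fin k) (h : ∀ e ∈ unionE Es, ∀ p ∈ e, p.1 = i) :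
    unionE Es = (Es i).map (Sym2.map (Sigma.mk i)) := by
  refine Finset.sum_eq_single_of_mem i (Finset.mem_univ _) fun j _ hji => ?_
  refine Multiset.eq_zero_of_forall_notMem fun z hz => ?_
  obtain ⟨e, he, rfl⟩ := Multiset.mem_map.1 hz
  induction e using Sym2.ind with
  | h a b => exact hji (h _ (mem_unionE.2 ⟨j, _, he, rfl⟩) ⟨j, a⟩ (by simp))

lemma exists_edgeIso_of_map_eq_unionE {K : ℕ} (hK : 0 < K) {B : Multiset (Sym2 (Fin K))}
    (hB : ∀ x y, Reach B x y) (hEs : ∀ i x y, Reach (Es i) x y) (g : Fin K ↪ Σ i, Fin (m i))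
    (hg : B.map (Sym2.map g) = unionE Es) : ∃ i, EdgeIso (Es i) B := by
  set i := (g ⟨0, hK⟩).1
  have hreach : ∀ {p q}, Reach (B.map (Sym2.map g)) p q ↔ p.1 = q.1 := by
    rw [hg]; exact reach_unionE_iff hEs
  have hblock : ∀ x, (g x).1 = i := fun x => (hreach.1 ((hB x ⟨0, hK⟩).map g))
  have hsurj : ∀ w : Fin (m i), ∃ x, g x = ⟨i, w⟩ := fun w =>
    (hreach (p := g ⟨0, hK⟩) (q := ⟨i, w⟩)).2 rfl |>.exists_eq_of_map
  choose σ hσ using hsurj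
  have hσinj : Function.Injective σ := fun w w' h => by
    simpa using (hσ w).symm.trans ((congrArg g h).trans (hσ w'))
  have hσsurj : Function.Surjective σ := fun x => by
    rcases hx : g x with ⟨j, w⟩
    obtain rfl : j = i := by rw [← hblock x, hx]
    exact ⟨w, g.injective ((hσ w).trans hx.symm)⟩
  refine ⟨i, Equiv.ofBijective σ ⟨hσinj, hσsurj⟩, Multiset.map_injective
    (Sym2.map.injective g.injective) ?_⟩
  have hi : unionE Es = (Es i).map (Sym2.map (Sigma.mk i)) :=
    unionE_eq_map_of_forall_fst_eq i fun e he p hp => by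
      rw [← hg] at he
      obtain ⟨e, -, rfl⟩ := Multiset.mem_map.1 he
      obtain ⟨x, -, rfl⟩ := Sym2.mem_map.1 hp
      exact hblock x
  rw [hg, hi, map_map_sym2]
  congr 2
  funext w
  exact hσ w

end unionE

def sigmaFinTwoEquiv {m : Fin 2 → ℕ} : (Σ i : Fin 2, Fin (m i)) ≃ Fin (m 0) ⊕ Fin (m 1) where
  toFun
    | ⟨0, x⟩ => Sum.inl x
    | ⟨1, x⟩ => Sum.inr x
  invFun
    | Sum.inl x => ⟨0, x⟩
    | Sum.inr x => ⟨1, x⟩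
  left_inv := by
    rintro ⟨i, x⟩
    fin_cases i <;> rfl
  right_inv := by rintro (x | x) <;> rfl

lemma exists_edgeIso_bridgeE_of_map_eq_unionE {m : Fin 2 → ℕ}
    {Es : ∀ i, Multiset (Sym2 (Fin (m i)))} {F : Multiset (Sym2 V)} (φ : V ≃ Σ i, Fin (m i))
    (hφ : F.map (Sym2.map φ) = unionE Es) {x y : V} (hxy : (φ x).1 ≠ (φ y).1) :
    ∃ u v, EdgeIso (F + {s(x, y)}) (bridgeE (Es 0) (Es 1) u v) := by
  have hcross : ∀ p q : Σ i : Fin 2, Fin (m i), p.1 ≠ q.1 →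
      ∃ u v, s(sigmaFinTwoEquiv p, sigmaFinTwoEquiv q) = s(Sum.inl u, Sum.inr v) := by
    rintro ⟨i, p⟩ ⟨j, q⟩ h
    fin_cases i <;> fin_cases j
    · exact absurd rfl h
    · exact ⟨p, q, rfl⟩
    · exact ⟨q, p, Sym2.eq_swap⟩
    · exact absurd rfl h
  obtain ⟨u, v, huv⟩ := hcross _ _ hxy
  refine ⟨u, v, φ.trans sigmaFinTwoEquiv, ?_⟩
  rw [Multiset.map_add, Equiv.coe_trans, ← map_map_sym2, hφ, Multiset.map_singleton, Sym2.map_mk]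
  simp only [Function.comp_apply, huv, bridgeE, unionE, Fin.sum_univ_two, Multiset.map_add,
    map_map_sym2]
  rfl

structure IsNeatFamily (Gs : ∀ n : ℕ, Multiset (Sym2 (Fin n))) : Prop where
  reach : ∀ n, 1 ≤ n → ∀ u v : Fin n, Reach (Gs n) u v
  neat : ∀ n, 1 ≤ n → ∀ S ≤ Gs n, ∃ l : List ℕ, (∀ x ∈ l, 0 < x) ∧ l.sum = n ∧
    ∃ φ : Fin n ≃ (Σ i : Fin l.length, Fin (l.get i)),
      (Gs n - S).map (Sym2.map φ) =
        unionE (m := fun i : Fin l.length => l.get i) (fun i => Gs (l.get i))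

namespace IsNeatFamily

variable {Gs : ∀ n : ℕ, Multiset (Sym2 (Fin n))}

lemma edgeIso_of_embeds (hG : IsNeatFamily Gs) {k n : ℕ} (hk : 0 < k)
    {B : Multiset (Sym2 (Fin k))} (hB : ∀ x y, Reach B x y) (h : Embeds B (Gs n)) :
    EdgeIso (Gs k) B := by
  obtain ⟨j, hj⟩ := h
  obtain ⟨l, hpos, -, φ, hφ⟩ := hG.neat n (j ⟨0, hk⟩).pos (Gs n - B.map (Sym2.map j)) tsub_le_self
  rw [tsub_tsub_cancel_of_le hj] at hφ
  obtain ⟨i, σ, hσ⟩ := exists_edgeIso_of_map_eq_unionE hk hB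
    (fun i => hG.reach _ (hpos _ (List.get_mem l i))) (j.trans φ.toEmbedding)
    (by rw [← hφ, map_map_sym2]; rfl)
  obtain rfl : l.get i = k := Fin.equiv_iff_eq.1 ⟨σ⟩
  exact ⟨σ, hσ⟩

lemma exists_edgeIso_bridgeE (hG : IsNeatFamily Gs) {n : ℕ} (hn : 1 ≤ n) {e : Sym2 (Fin n)}
    (he : e ∈ Gs n) :
    ∃ a b, 0 < a ∧ 0 < b ∧ a + b = n ∧ ∃ u v, EdgeIso (Gs n) (bridgeE (Gs a) (Gs b) u v) := by
  induction e using Sym2.ind with | h x y => ?_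
  have hle := Multiset.singleton_le.2 he
  obtain ⟨l, hpos, hsum, φ, hφ⟩ := hG.neat n hn {s(x, y)} hle
  have hEs : ∀ i x y, Reach (Gs (l.get i)) x y := fun i => hG.reach _ (hpos _ (List.get_mem l i))
  have hblock : ∀ i, i = (φ x).1 ∨ i = (φ y).1 := fun i => by
    have := (hG.reach n hn (φ.symm ⟨i, ⟨0, hpos _ (List.get_mem l i)⟩⟩) x).sub_singleton_or (y := y)
    rwa [reach_iff_of_map_eq_unionE φ hφ hEs, reach_iff_of_map_eq_unionE φ hφ hEs,
      Equiv.apply_symm_apply] at this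
  have hlen : l.length ≠ 1 := by
    intro h1
    obtain ⟨c, rfl⟩ := List.length_eq_one_iff.1 h1
    obtain rfl : n = c := by simpa using hsum.symm
    have hcard := congrArg Multiset.card hφ
    rw [Multiset.card_map, card_unionE, Multiset.card_sub hle, Multiset.card_singleton] at hcard
    erw [Fin.sum_univ_one] at hcard
    change _ = Multiset.card (Gs n) at hcard
    have := Multiset.card_pos_iff_exists_mem.2 ⟨_, he⟩
    omega
  have hxy : (φ x).1 ≠ (φ y).1 := fun h => hlen (by
    simpa using Fintype.card_eq_one_iff.2 ⟨(φ x).1, fun i => (hblock i).elim id (·.trans h.symm)⟩)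
  have hlen2 : l.length = 2 := by
    have : (Finset.univ : Finset (Fin l.length)) = {(φ x).1, (φ y).1} := by
      ext i; simpa using hblock i
    simpa [Finset.card_pair hxy] using congrArg Finset.card this
  obtain ⟨a, b, rfl⟩ := List.length_eq_two.1 hlen2
  obtain ⟨u, v, h⟩ := exists_edgeIso_bridgeE_of_map_eq_unionE φ hφ hxy
  refine ⟨a, b, hpos a (by simp), hpos b (by simp), by simpa using hsum, u, v, ?_⟩
  rwa [tsub_add_cancel_of_le hle] at h

lemma apply_one_eq_zero (hG : IsNeatFamily Gs) : Gs 1 = 0 :=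
  Multiset.eq_zero_of_forall_notMem fun _ he => by
    obtain ⟨a, b, ha, hb, hab, -⟩ := hG.exists_edgeIso_bridgeE le_rfl he
    omega

lemma forall_edgeIso_of_bridgeE (hG : IsNeatFamily Gs) {H : ∀ n, Multiset (Sym2 (Fin n))}
    (h₁ : H 1 = 0) (hstep : ∀ a b, 0 < a → 0 < b → ∀ (u : Fin a) (v : Fin b),
      EdgeIso (Gs (a + b)) (bridgeE (H a) (H b) u v) → EdgeIso (Gs (a + b)) (H (a + b))) :
    ∀ n, 1 ≤ n → EdgeIso (Gs n) (H n) := by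
  intro n
  induction n using Nat.strong_induction_on with
  | _ n ih =>
  intro hn
  obtain rfl | hn2 : n = 1 ∨ 2 ≤ n := by omega
  · rw [hG.apply_one_eq_zero, h₁]
  obtain ⟨w, hw⟩ := (hG.reach n hn ⟨0, hn⟩ ⟨1, hn2⟩).exists_mem_of_ne (by simp [Fin.ext_iff])
  obtain ⟨a, b, ha, hb, rfl, u, v, h⟩ := hG.exists_edgeIso_bridgeE hn hw
  obtain ⟨σ, hσ⟩ := ih a (by omega) ha
  obtain ⟨τ, hτ⟩ := ih b (by omega) hb
  exact hstep a b ha hb _ _ (h.trans (edgeIso_bridgeE hσ hτ))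

lemma forall_edgeIso_pathE (hG : IsNeatFamily Gs) (hclaw : ∀ n, ¬ Embeds (starE 4) (Gs n)) :
    ∀ n, 1 ≤ n → EdgeIso (Gs n) (pathE n) :=
  hG.forall_edgeIso_of_bridgeE pathE_one fun _ _ _ _ _ _ h =>
    h.trans (edgeIso_bridgeE_pathE_of_not_embeds fun hX => hclaw _ (hX.edgeIso h.symm))

lemma forall_edgeIso_starE (hG : IsNeatFamily Gs) (hP4 : ∀ n, ¬ Embeds (pathE 4) (Gs n)) :
    ∀ n, 1 ≤ n → EdgeIso (Gs n) (starE n) :=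
  hG.forall_edgeIso_of_bridgeE starE_one fun _ _ ha hb _ _ h =>
    h.trans (edgeIso_bridgeE_starE_of_not_embeds ha hb fun hX => hP4 _ (hX.edgeIso h.symm))

end IsNeatFamily

theorem neat_families_are_paths_or_stars_general
    (Gs : ∀ n : ℕ, Multiset (Sym2 (Fin n)))
    (hconn : ∀ n, 1 ≤ n → ∀ u v : Fin n,
      Relation.ReflTransGen (fun x y : Fin n => s(x, y) ∈ Gs n) u v)
    (hneat : ∀ n, 1 ≤ n → ∀ S ≤ Gs n, ∃ l : List ℕ,
      l.Pairwise (· ≥ ·) ∧ (∀ x ∈ l, 0 < x) ∧ l.sum = n ∧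
      ∃ φ : Fin n ≃ (Σ i : Fin l.length, Fin (l.get i)),
        (Gs n - S).map (Sym2.map φ) =
          unionE (m := fun i : Fin l.length => l.get i) (fun i => Gs (l.get i))) :
    (∀ n, 1 ≤ n → ∃ φ : Fin n ≃ Fin n, (Gs n).map (Sym2.map φ) = pathE n) ∨
    (∀ n, 1 ≤ n → ∃ φ : Fin n ≃ Fin n, (Gs n).map (Sym2.map φ) = starE n) := by
  have hG : IsNeatFamily Gs := ⟨hconn, fun n hn S hS => (hneat n hn S hS).imp fun _ => And.right⟩
  by_cases hclaw : ∃ n, Embeds (starE 4) (Gs n)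
  · obtain ⟨n, hn⟩ := hclaw
    have h4 : EdgeIso (Gs 4) (starE 4) := hG.edgeIso_of_embeds (by norm_num) reach_starE hn
    refine Or.inr (hG.forall_edgeIso_starE fun m hm => not_edgeIso_pathE_starE_four ?_)
    exact (hG.edgeIso_of_embeds (by norm_num) reach_pathE hm).symm.trans h4
  · exact Or.inl (hG.forall_edgeIso_pathE (not_exists.1 hclaw))

/-- **Proposition.** The only neat families of unweighted graphs are the paths and the
stars: if `{G_n}_{n ≥ 1}` is a nifty family (simple connected, `G_n` on `n` vertices) such
that deleting any set of edges of any `G_n` yields a graph isomorphic to some `G_λ` with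
`λ ⊢ n`, then either `G_n ≅ P_n` for all `n ≥ 1` or `G_n ≅ S_n` for all `n ≥ 1`. -/
theorem neat_families_are_paths_or_stars
    (Gs : ∀ n : ℕ, Multiset (Sym2 (Fin n)))
    (hsimple : ∀ n, 1 ≤ n → (Gs n).Nodup ∧ ∀ e ∈ Gs n, ¬ e.IsDiag)
    (hconn : ∀ n, 1 ≤ n → ∀ u v : Fin n,
      Relation.ReflTransGen (fun x y : Fin n => s(x, y) ∈ Gs n) u v)
    (hneat : ∀ n, 1 ≤ n → ∀ S ≤ Gs n, ∃ l : List ℕ,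
      l.Pairwise (· ≥ ·) ∧ (∀ x ∈ l, 0 < x) ∧ l.sum = n ∧
      ∃ φ : Fin n ≃ (Σ i : Fin l.length, Fin (l.get i)),
        (Gs n - S).map (Sym2.map φ) =
          unionE (m := fun i : Fin l.length => l.get i) (fun i => Gs (l.get i))) :
    (∀ n, 1 ≤ n → ∃ φ : Fin n ≃ Fin n, (Gs n).map (Sym2.map φ) = pathE n) ∨
    (∀ n, 1 ≤ n → ∃ φ : Fin n ≃ Fin n, (Gs n).map (Sym2.map φ) = starE n) :=
  neat_families_are_paths_or_stars_general Gs hconn hneat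

end CSF
end

section
/- For every partition λ, the power sum symmetric functions expand into the chromatic basis generated by the family of paths via p_λ = Σ_{α ≼ λ} (−1)^{|λ|−ℓ(α)} X_{P_{α̃}}, and conversely X_{P_λ} = Σ_{α ≼ λ} (−1)^{|λ|−ℓ(α)} p_{α̃}, where both sums are over compositions α refining λ (viewed as a composition). -/
open scoped BigOperators
open scoped Classical

namespace CSF

/-!
Let `C_R(n)` be the generating series of the words of length `n` over `ℕ+` whose adjacent
letters are `R`-related; then `C_{=}(n) = p_n` and `C_{≠}(n) = X_{P_n}`. For a nonempty word,
the positions `a` at which it splits into an `R`-chain followed by a `¬R`-chain are either none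
or two consecutive ones, so `∑_a (-1)^a C_R(a) C_{¬R}(n-a) = 0` for `n ≥ 1`. Taking `R` to be `=`
and `≠` gives `∑_a (-1)^a p_a X_{P_{n-a}} = 0` and `∑_a (-1)^a X_{P_a} p_{n-a} = 0`; solving either
recursion expresses one family as a signed sum over compositions of `n` of products of the other.
Since `X_{P_μ} = ∏ X_{P_{μ_i}}`, multiplying these over the parts of `λ` gives both expansions.
-/

section CountSeries

variable {T U : Type*}

/-- The generating series `∑_{x : T} x^{F x}` of a weighted type. -/
noncomputable def countSeries (F : T → ℕ+ →₀ ℕ) : MvPowerSeries ℕ+ ℚ :=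
  fun m => Nat.card (F ⁻¹' {m})

lemma coeff_countSeries (F : T → ℕ+ →₀ ℕ) (m : ℕ+ →₀ ℕ) :
    MvPowerSeries.coeff m (countSeries F) = Nat.card (F ⁻¹' {m}) := rfl

lemma countSeries_congr {F : T → ℕ+ →₀ ℕ} {G : U → ℕ+ →₀ ℕ} (e : T ≃ U)
    (h : ∀ x, G (e x) = F x) : countSeries F = countSeries G := by
  ext m
  simp only [coeff_countSeries]
  exact congrArg _ (Nat.card_congr (e.subtypeEquiv fun x => by simp [h]))

lemma countSeries_of_unique [Unique T] {F : T → ℕ+ →₀ ℕ} (hF : F default = 0) :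
    countSeries F = 1 := by
  ext m
  rw [coeff_countSeries, MvPowerSeries.coeff_one]
  split_ifs with hm
  · have : F ⁻¹' {m} = Set.univ :=
      Set.eq_univ_of_forall fun x => by simp [Unique.eq_default x, hF, hm]
    simp [this]
  · have : F ⁻¹' {m} = ∅ :=
      Set.eq_empty_of_forall_notMem fun x => by simp [Unique.eq_default x, hF, Ne.symm hm]
    simp [this]

lemma countSeries_mul {F : T → ℕ+ →₀ ℕ} {G : U → ℕ+ →₀ ℕ}
    (hF : ∀ m, (F ⁻¹' {m}).Finite) (hG : ∀ m, (G ⁻¹' {m}).Finite) :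
    countSeries F * countSeries G = countSeries (fun p : T × U => F p.1 + G p.2) := by
  ext m
  rw [MvPowerSeries.coeff_mul, coeff_countSeries]
  let e : ((fun p : T × U => F p.1 + G p.2) ⁻¹' {m}) ≃
      Σ q : Finset.HasAntidiagonal.antidiagonal m, (F ⁻¹' {q.1.1}) × (G ⁻¹' {q.1.2}) :=
    { toFun := fun p => ⟨⟨(F p.1.1, G p.1.2), Finset.HasAntidiagonal.mem_antidiagonal.2 p.2⟩,
        ⟨p.1.1, rfl⟩, ⟨p.1.2, rfl⟩⟩
      invFun := fun s => ⟨(s.2.1, s.2.2), by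
        change F _ + G _ = m
        rw [Set.mem_singleton_iff.1 s.2.1.2, Set.mem_singleton_iff.1 s.2.2.2]
        exact Finset.HasAntidiagonal.mem_antidiagonal.1 s.1.2⟩
      left_inv := fun p => rfl
      right_inv := by
        rintro ⟨⟨⟨m₁, m₂⟩, hq⟩, ⟨x, hx⟩, ⟨y, hy⟩⟩
        obtain rfl : F x = m₁ := hx
        obtain rfl : G y = m₂ := hy
        rfl }
  have := fun q : Finset.HasAntidiagonal.antidiagonal m => (hF q.1.1).to_subtype
  have := fun q : Finset.HasAntidiagonal.antidiagonal m => (hG q.1.2).to_subtype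
  rw [Nat.card_congr e, Nat.card_sigma, Nat.cast_sum, ← Finset.sum_coe_sort]
  simp only [Nat.card_prod, Nat.cast_mul, coeff_countSeries]

lemma finite_preimage_sum {ι : Type*} [Fintype ι] {T : ι → Type*} {F : ∀ i, T i → ℕ+ →₀ ℕ}
    (hF : ∀ i m, (F i ⁻¹' {m}).Finite) (m : ℕ+ →₀ ℕ) :
    ((fun g : ∀ i, T i => ∑ i, F i (g i)) ⁻¹' {m}).Finite := by
  refine (Set.Finite.pi fun i => (Set.finite_Iic m).preimage' fun q _ => hF i q).subset ?_
  intro g hg i _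
  exact (Finset.single_le_sum (f := fun j => F j (g j)) (fun _ _ => zero_le)
    (Finset.mem_univ i)).trans_eq hg

lemma countSeries_pi : ∀ {k : ℕ} {T : Fin k → Type*} {F : ∀ i, T i → ℕ+ →₀ ℕ},
    (∀ i m, (F i ⁻¹' {m}).Finite) →
    countSeries (fun g : ∀ i, T i => ∑ i, F i (g i)) = ∏ i, countSeries (F i)
  | 0, T, F, _ => countSeries_of_unique (by simp)
  | k + 1, T, F, hF => by
    rw [Fin.prod_univ_succ, ← countSeries_pi fun i => hF i.succ,
      countSeries_mul (hF 0) (finite_preimage_sum fun i => hF i.succ)]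
    exact countSeries_congr (Fin.consEquiv T).symm fun g => by simp [Fin.sum_univ_succ, Fin.tail]

end CountSeries

lemma sum_neg_one_pow_isChain_take_drop {α M : Type*} [Ring M] (R : α → α → Prop) :
    ∀ {w : List α}, w ≠ [] →
    ∑ a ∈ Finset.range (w.length + 1), (-1 : M) ^ a *
      (if (w.take a).IsChain R ∧ (w.drop a).IsChain (fun x y => ¬ R x y) then 1 else 0) = 0
  | [], h => absurd rfl h
  | [x], _ => by simp [Finset.sum_range_succ]
  | x :: y :: t, _ => by
    have ih := sum_neg_one_pow_isChain_take_drop (M := M) R (List.cons_ne_nil y t)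
    have shift : ∀ a, (-1 : M) ^ (a + 1) * (if ((x :: y :: t).take (a + 1)).IsChain R ∧
          ((x :: y :: t).drop (a + 1)).IsChain (fun x y => ¬ R x y) then 1 else 0) =
        -((-1) ^ a * (if (a = 0 ∨ R x y) ∧ ((y :: t).take a).IsChain R ∧
          ((y :: t).drop a).IsChain (fun x y => ¬ R x y) then 1 else 0)) := by
      intro a
      have head_rel : (∀ z ∈ ((y :: t).take a).head?, R x z) ↔ (a = 0 ∨ R x y) := by
        cases a <;> simp
      simp only [List.take_succ_cons, List.drop_succ_cons, List.isChain_cons, head_rel, pow_succ',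
        and_assoc, neg_mul, one_mul]
    rw [show (x :: y :: t).length = (y :: t).length + 1 from rfl, Finset.sum_range_succ',
      Finset.sum_congr rfl fun a _ => shift a, Finset.sum_neg_distrib]
    -- If `R x y`, the cut at `0` is invalid and the other cuts are those of `y :: t`, shifted
    -- by one; otherwise only the cuts at `0` and `1` can be valid, and they are valid together.
    by_cases hxy : R x y
    · simp only [hxy, or_true, true_and, ih]
      simp [hxy]
    · simp only [hxy, or_false, ite_and, mul_ite, mul_zero, Finset.sum_ite_eq', Finset.mem_range]
      simp [hxy]

lemma isChain_eq_iff_exists_eq_replicate {α : Type*} [Nonempty α] {w : List α} :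
    w.IsChain (· = ·) ↔ ∃ a, w = List.replicate w.length a := by
  cases w with
  | nil => simp
  | cons x t => simp [List.isChain_cons_eq_iff_eq_replicate, List.replicate_succ]

section Words

noncomputable def wordWeight (w : List ℕ+) : ℕ+ →₀ ℕ := (w.map fun x => Finsupp.single x 1).sum

lemma wordWeight_append (u v : List ℕ+) : wordWeight (u ++ v) = wordWeight u + wordWeight v := by
  simp [wordWeight]

lemma wordWeight_ofFn {n : ℕ} (κ : Fin n → ℕ+) : wordWeight (List.ofFn κ) = mon (fun _ => 1) κ := by
  simp [wordWeight, mon, List.sum_ofFn]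

lemma toMultiset_wordWeight (w : List ℕ+) : Finsupp.toMultiset (wordWeight w) = w := by
  induction w with
  | nil => simp [wordWeight]
  | cons x w ih => simp_all [wordWeight]

noncomputable def wordsOfWeight (m : ℕ+ →₀ ℕ) : Finset (List ℕ+) :=
  (Finsupp.toMultiset m).lists.toFinset

lemma mem_wordsOfWeight {w : List ℕ+} {m : ℕ+ →₀ ℕ} :
    w ∈ wordsOfWeight m ↔ wordWeight w = m := by
  rw [wordsOfWeight, Multiset.mem_toFinset, Multiset.mem_lists_iff, Multiset.quot_mk_to_coe,
    Finsupp.toMultiset_eq_iff, ← toMultiset_wordWeight w, Finsupp.toMultiset_toFinsupp, eq_comm]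

lemma coeff_countSeries_wordWeight (P : List ℕ+ → Prop) [DecidablePred P] (m : ℕ+ →₀ ℕ) :
    MvPowerSeries.coeff m (countSeries fun w : {w // P w} => wordWeight w.1) =
      ((wordsOfWeight m).filter P).card := by
  rw [coeff_countSeries, ← Nat.card_eq_finsetCard]
  exact congrArg _ (Nat.card_congr
    ((Equiv.subtypeSubtypeEquivSubtypeInter P (fun w => wordWeight w = m)).trans
      (Equiv.subtypeEquivRight fun w => by rw [Finset.mem_filter, mem_wordsOfWeight, and_comm])))

lemma finite_preimage_wordWeight (P : List ℕ+ → Prop) (m : ℕ+ →₀ ℕ) :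
    ((fun w : {w // P w} => wordWeight w.1) ⁻¹' {m}).Finite :=
  ((wordsOfWeight m).finite_toSet.preimage Subtype.val_injective.injOn).subset
    fun _ hw => mem_wordsOfWeight.2 hw

lemma wordWeight_replicate (n : ℕ) (j : ℕ+) :
    wordWeight (List.replicate n j) = Finsupp.single j n := by
  simp [wordWeight, List.map_replicate, List.sum_replicate]

lemma mem_filter_wordsOfWeight_isChain_eq {n : ℕ} {m : ℕ+ →₀ ℕ} {w : List ℕ+} :
    w ∈ (wordsOfWeight m).filter (fun w => w.length = n ∧ w.IsChain (· = ·)) ↔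
      ∃ j, w = List.replicate n j ∧ m = Finsupp.single j n := by
  rw [Finset.mem_filter, mem_wordsOfWeight, isChain_eq_iff_exists_eq_replicate]
  constructor
  · rintro ⟨rfl, rfl, j, hj⟩
    exact ⟨j, hj, by rw [hj, wordWeight_replicate, List.length_replicate]⟩
  · rintro ⟨j, rfl, rfl⟩
    exact ⟨wordWeight_replicate n j, List.length_replicate, j, by rw [List.length_replicate]⟩

end Words

section ChainSeries

noncomputable def chainSeries (R : ℕ+ → ℕ+ → Prop) (n : ℕ) : MvPowerSeries ℕ+ ℚ :=
  countSeries fun w : {w : List ℕ+ // w.length = n ∧ w.IsChain R} => wordWeight w.1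

lemma chainSeries_zero (R : ℕ+ → ℕ+ → Prop) : chainSeries R 0 = 1 :=
  letI : Unique {w : List ℕ+ // w.length = 0 ∧ w.IsChain R} :=
    ⟨⟨⟨[], rfl, .nil⟩⟩, fun w => Subtype.ext (List.eq_nil_of_length_eq_zero w.2.1)⟩
  countSeries_of_unique List.sum_nil

lemma chainSeries_mul (R R' : ℕ+ → ℕ+ → Prop) {a n : ℕ} (ha : a ≤ n) :
    chainSeries R a * chainSeries R' (n - a) =
      countSeries fun w : {w : List ℕ+ //
        w.length = n ∧ (w.take a).IsChain R ∧ (w.drop a).IsChain R'} => wordWeight w.1 := by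
  rw [chainSeries, chainSeries,
    countSeries_mul (finite_preimage_wordWeight _) (finite_preimage_wordWeight _)]
  refine countSeries_congr
    { toFun := fun p => ⟨p.1.1 ++ p.2.1, by
        obtain ⟨⟨u, hu, hRu⟩, ⟨v, hv, hRv⟩⟩ := p
        refine ⟨by simp [hu, hv, ha], ?_, ?_⟩
        · rwa [List.take_left' hu]
        · rwa [List.drop_left' hu]⟩
      invFun := fun w => (⟨w.1.take a, by simp [w.2.1, ha], w.2.2.1⟩,
        ⟨w.1.drop a, by simp [w.2.1], w.2.2.2⟩)
      left_inv := by
        rintro ⟨⟨u, hu, -⟩, ⟨v, -, -⟩⟩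
        simp [List.take_left' hu, List.drop_left' hu]
      right_inv := fun w => Subtype.ext (List.take_append_drop a w.1) }
    fun p => wordWeight_append _ _

lemma sum_chainSeries_mul_chainSeries_not (R : ℕ+ → ℕ+ → Prop) {n : ℕ} (hn : 0 < n) :
    ∑ a ∈ Finset.range (n + 1),
      (-1 : ℚ) ^ a • (chainSeries R a * chainSeries (fun x y => ¬ R x y) (n - a)) = 0 := by
  ext m
  simp only [map_sum, map_zero, MvPowerSeries.coeff_smul]
  rw [Finset.sum_congr rfl fun a ha => by
    rw [chainSeries_mul _ _ (Finset.mem_range_succ_iff.1 ha), coeff_countSeries_wordWeight,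
      Finset.card_filter, Nat.cast_sum, Finset.mul_sum], Finset.sum_comm]
  refine Finset.sum_eq_zero fun w _ => ?_
  by_cases hw : w.length = n
  · subst hw
    simpa using sum_neg_one_pow_isChain_take_drop (M := ℚ) R (List.ne_nil_of_length_pos hn)
  · simp [hw]

lemma chainSeries_eq_pS (n : ℕ) : chainSeries (· = ·) n = pS n := by
  ext m
  rw [chainSeries, coeff_countSeries_wordWeight]
  change _ = ((if ∃ j : ℕ+, m = Finsupp.single j n then 1 else 0 : ℚ))
  split_ifs with h
  · obtain ⟨j, rfl⟩ := h
    rw [Nat.cast_eq_one, Finset.card_eq_one]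
    refine ⟨List.replicate n j, Finset.eq_singleton_iff_unique_mem.2
      ⟨mem_filter_wordsOfWeight_isChain_eq.2 ⟨j, rfl, rfl⟩, fun w hw => ?_⟩⟩
    obtain ⟨i, rfl, hij⟩ := mem_filter_wordsOfWeight_isChain_eq.1 hw
    rcases n.eq_zero_or_pos with rfl | hn
    · rfl
    · rw [Finsupp.single_left_injective hn.ne' hij]
  · rw [Nat.cast_eq_zero, Finset.card_eq_zero, Finset.eq_empty_iff_forall_notMem]
    intro w hw
    obtain ⟨j, -, hj⟩ := mem_filter_wordsOfWeight_isChain_eq.1 hw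
    exact h ⟨j, hj⟩

end ChainSeries

section Colourings

variable {V : Type*} [Fintype V]

lemma finite_preimage_mon_one (P : (V → ℕ+) → Prop) (m : ℕ+ →₀ ℕ) :
    ((fun κ : {κ // P κ} => mon (fun _ => 1) κ.1) ⁻¹' {m}).Finite := by
  refine ((Set.Finite.pi fun _ : V => m.support.finite_toSet).preimage
    Subtype.val_injective.injOn).subset fun κ (hκ : mon _ κ.1 = m) v _ => ?_
  have : 1 ≤ mon (fun _ => 1) κ.1 (κ.1 v) := by
    simpa [mon] using Finset.single_le_sum (f := fun u => Finsupp.single (κ.1 u) 1 (κ.1 v))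
      (fun _ _ => zero_le) (Finset.mem_univ v)
  rw [hκ] at this
  exact Finsupp.mem_support_iff.2 (by omega)

lemma X_one_eq_countSeries (E : Multiset (Sym2 V)) :
    X E (fun _ => 1) = countSeries fun κ : {κ // Proper E κ} => mon (fun _ => 1) κ.1 := by
  ext m
  rw [coeff_countSeries]
  exact congrArg Nat.cast (Nat.card_congr
    (Equiv.subtypeSubtypeEquivSubtypeInter (Proper E) (fun κ => mon (fun _ => 1) κ = m)).symm)

end Colourings

noncomputable def XPath (n : ℕ) : MvPowerSeries ℕ+ ℚ := X (pathE n) (fun _ => 1)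

lemma proper_pathE_iff {n : ℕ} (κ : Fin n → ℕ+) :
    Proper (pathE n) κ ↔ (List.ofFn κ).IsChain (· ≠ ·) := by
  rw [List.isChain_ofFn]
  constructor
  · exact fun h i hi => h _ _ (Multiset.mem_map.2 ⟨(⟨i, by omega⟩, ⟨i + 1, hi⟩), by simp, rfl⟩)
  · intro h u v huv
    obtain ⟨⟨a, b⟩, hab, he⟩ := Multiset.mem_map.1 huv
    have hab : (a : ℕ) + 1 = b := (Finset.mem_filter.1 hab).2
    have hκ : κ a ≠ κ b := by
      obtain ⟨b, hb⟩ := b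
      obtain rfl : (a : ℕ) + 1 = b := hab
      exact h a hb
    rcases Sym2.eq_iff.1 he with ⟨rfl, rfl⟩ | ⟨rfl, rfl⟩
    · exact hκ
    · exact hκ.symm

lemma chainSeries_ne_eq_XPath (n : ℕ) : chainSeries (· ≠ ·) n = XPath n := by
  rw [XPath, X_one_eq_countSeries, chainSeries]
  symm
  refine countSeries_congr
    (((Equiv.vectorEquivFin ℕ+ n).symm.subtypeEquiv (q := fun w => w.1.IsChain (· ≠ ·))
      fun κ => ?_).trans (Equiv.subtypeSubtypeEquivSubtypeInter _ _)) fun κ => ?_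
  · rw [proper_pathE_iff, ← List.Vector.toList_ofFn]
    rfl
  · change wordWeight (List.Vector.ofFn κ.1).toList = _
    rw [List.Vector.toList_ofFn, wordWeight_ofFn]

section DisjointUnion

variable {k : ℕ} {m : Fin k → ℕ}

lemma proper_unionE_iff (Es : ∀ i, Multiset (Sym2 (Fin (m i)))) (κ : (Σ i, Fin (m i)) → ℕ+) :
    Proper (unionE Es) κ ↔ ∀ i, Proper (Es i) fun v => κ ⟨i, v⟩ := by
  constructor
  · exact fun h i a b hab => h _ _ (Multiset.mem_sum.2
      ⟨i, Finset.mem_univ i, Multiset.mem_map.2 ⟨s(a, b), hab, rfl⟩⟩)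
  · intro h u v huv
    obtain ⟨i, -, hi⟩ := Multiset.mem_sum.1 huv
    obtain ⟨e, he, hmap⟩ := Multiset.mem_map.1 hi
    induction e using Sym2.ind with
    | _ a b =>
      rw [Sym2.map_mk] at hmap
      rcases Sym2.eq_iff.1 hmap with ⟨rfl, rfl⟩ | ⟨rfl, rfl⟩
      · exact h i a b he
      · exact (h i a b he).symm

lemma X_unionE (Es : ∀ i, Multiset (Sym2 (Fin (m i)))) :
    X (unionE Es) (fun _ => 1) = ∏ i, X (Es i) (fun _ => 1) := by
  simp only [X_one_eq_countSeries]
  rw [← countSeries_pi fun i => finite_preimage_mon_one _]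
  refine countSeries_congr
    ((Equiv.subtypeEquivRight (proper_unionE_iff Es)).trans
      (((Equiv.piCurry fun i (_ : Fin (m i)) => ℕ+).subtypeEquiv
        (q := fun f => ∀ i, Proper (Es i) (f i)) fun _ => Iff.rfl).trans
        (Equiv.subtypePiEquivPi (p := fun i κ => Proper (Es i) κ)))) fun κ => ?_
  simp only [mon, Fintype.sum_sigma]
  rfl

end DisjointUnion

lemma XPaths_eq_prod (l : List ℕ) : XPaths l = (l.map XPath).prod := by
  rw [XPaths, Xunion, X_unionE, ← List.prod_ofFn]
  conv_rhs => rw [← List.ofFn_get l, List.map_ofFn]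
  rfl

lemma length_le_of_mem_comps {n : ℕ} {α : List ℕ} (hα : α ∈ comps n) : α.length ≤ n := by
  induction n using Nat.strong_induction_on generalizing α with
  | _ n ih =>
  rcases n with _ | n
  · simp_all [comps]
  rw [comps] at hα
  obtain ⟨j, -, hα⟩ := List.mem_flatMap.1 hα
  obtain ⟨c, hc, rfl⟩ := List.mem_map.1 hα
  have hj := List.mem_range.1 j.2
  have := ih j.1 hj hc
  simp only [List.length_cons]
  omega

lemma length_le_of_mem_refinements : ∀ {l α : List ℕ}, α ∈ refinements l → α.length ≤ l.sum
  | [], α, hα => by simp_all [refinements]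
  | a :: l, α, hα => by
    rw [refinements] at hα
    obtain ⟨c, hc, hα⟩ := List.mem_flatMap.1 hα
    obtain ⟨r, hr, rfl⟩ := List.mem_map.1 hα
    have := length_le_of_mem_comps hc
    have := length_le_of_mem_refinements hr
    simp only [List.length_append, List.sum_cons]
    omega

section SignedCompositionSum

variable {A : Type*} [CommRing A] [Algebra ℚ A]

noncomputable def signedCompositionSum (h : ℕ → A) (n : ℕ) : A :=
  ((comps n).map fun α => (-1 : ℚ) ^ (n - α.length) • (α.map h).prod).sum

lemma signedCompositionSum_zero (h : ℕ → A) : signedCompositionSum h 0 = 1 := by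
  simp [signedCompositionSum, comps]

lemma signedCompositionSum_succ (h : ℕ → A) (n : ℕ) :
    signedCompositionSum h (n + 1) = ∑ j ∈ Finset.range (n + 1),
      (-1 : ℚ) ^ (n - j) • (h (n + 1 - j) * signedCompositionSum h j) := by
  rw [signedCompositionSum, comps, Finset.sum, Finset.range_val, Multiset.range, Multiset.map_coe,
    Multiset.sum_coe, ← List.attach_map_val (l := List.range (n + 1))]
  simp only [List.flatMap, List.map_flatten, List.sum_flatten, List.map_map]
  congr 1
  refine List.map_congr_left fun ⟨j, hj⟩ _ => ?_
  rw [signedCompositionSum, ← List.sum_map_mul_left, List.smul_sum]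
  simp only [Function.comp_apply, List.map_map]
  refine congrArg List.sum (List.map_congr_left fun c hc => ?_)
  have := length_le_of_mem_comps hc
  have := List.mem_range.1 hj
  simp only [Function.comp_apply, List.map_cons, List.prod_cons, List.length_cons, mul_smul_comm,
    smul_smul, ← pow_add]
  congr 2
  omega

lemma neg_one_pow_sub_eq_mul {R : Type*} [Monoid R] [HasDistribNeg R] {j k : ℕ} (hj : j ≤ k) :
    (-1 : R) ^ (k - j) = (-1) ^ k * (-1) ^ j := by
  obtain ⟨d, rfl⟩ := Nat.exists_eq_add_of_le hj
  rw [Nat.add_sub_cancel_left, ← pow_add, show j + d + j = d + 2 * j by ring, pow_add, pow_mul,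
    neg_one_sq, one_pow, mul_one]

lemma eq_signedCompositionSum {g h : ℕ → A} (hg : g 0 = 1) (hh : h 0 = 1)
    (hgh : ∀ n, 0 < n → ∑ a ∈ Finset.range (n + 1), (-1 : ℚ) ^ a • (g a * h (n - a)) = 0)
    (n : ℕ) : g n = signedCompositionSum h n := by
  induction n using Nat.strong_induction_on with
  | _ n ih =>
  rcases n with _ | k
  · rw [hg, signedCompositionSum_zero]
  have hk := hgh (k + 1) k.succ_pos
  rw [Finset.sum_range_succ, Nat.sub_self, hh, mul_one] at hk
  rw [signedCompositionSum_succ]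
  calc g (k + 1) = (-1 : ℚ) ^ k • -((-1 : ℚ) ^ (k + 1) • g (k + 1)) := by
        rw [smul_neg, smul_smul, ← pow_add, show k + (k + 1) = 2 * k + 1 by ring, pow_succ, pow_mul]
        norm_num
    _ = (-1 : ℚ) ^ k • ∑ a ∈ Finset.range (k + 1), (-1 : ℚ) ^ a • (g a * h (k + 1 - a)) := by
        rw [eq_neg_of_add_eq_zero_left hk]
    _ = _ := by
        rw [Finset.smul_sum]
        refine Finset.sum_congr rfl fun j hj => ?_
        have hj := Finset.mem_range_succ_iff.1 hj
        rw [← ih j (by omega), smul_smul, neg_one_pow_sub_eq_mul hj, mul_comm (g j)]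

lemma prod_map_eq_sum_refinements {g h : ℕ → A}
    (hgh : ∀ n, g n = signedCompositionSum h n) (l : List ℕ) :
    (l.map g).prod = ((refinements l).map fun α =>
      (-1 : ℚ) ^ (l.sum - α.length) • (α.map h).prod).sum := by
  induction l with
  | nil => simp [refinements]
  | cons a l ih =>
    rw [List.map_cons, List.prod_cons, ih, hgh, signedCompositionSum, refinements,
      ← List.sum_map_mul_right]
    simp only [List.flatMap, List.map_flatten, List.sum_flatten, List.map_map]
    refine congrArg List.sum (List.map_congr_left fun c hc => ?_)
    rw [← List.sum_map_mul_left]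
    simp only [Function.comp_apply, List.map_map]
    refine congrArg List.sum (List.map_congr_left fun r hr => ?_)
    have := length_le_of_mem_comps hc
    have := length_le_of_mem_refinements hr
    simp only [Function.comp_apply, List.map_append, List.prod_append, List.length_append,
      List.sum_cons, smul_mul_smul_comm, ← pow_add]
    congr 2
    omega

end SignedCompositionSum

lemma pS_eq_signedCompositionSum_XPath (n : ℕ) : pS n = signedCompositionSum XPath n := by
  refine eq_signedCompositionSum ?_ ?_ (fun n hn => ?_) n
  · rw [← chainSeries_eq_pS, chainSeries_zero]
  · rw [← chainSeries_ne_eq_XPath, chainSeries_zero]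
  · simpa only [chainSeries_eq_pS, chainSeries_ne_eq_XPath] using
      sum_chainSeries_mul_chainSeries_not (· = ·) hn

lemma XPath_eq_signedCompositionSum_pS (n : ℕ) : XPath n = signedCompositionSum pS n := by
  refine eq_signedCompositionSum ?_ ?_ (fun n hn => ?_) n
  · rw [← chainSeries_ne_eq_XPath, chainSeries_zero]
  · rw [← chainSeries_eq_pS, chainSeries_zero]
  · simpa only [chainSeries_eq_pS, chainSeries_ne_eq_XPath, ne_eq, not_not] using
      sum_chainSeries_mul_chainSeries_not (· ≠ ·) hn

theorem path_basis_power_sum_expansions_general (l : List ℕ) :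
    pProd l =
      ((refinements l).map fun α =>
        ((-1 : ℚ) ^ (l.sum - α.length)) • XPaths (sortDesc α)).sum ∧
    XPaths l =
      ((refinements l).map fun α =>
        ((-1 : ℚ) ^ (l.sum - α.length)) • pProd (sortDesc α)).sum := by
  have prod_sortDesc (f : ℕ → MvPowerSeries ℕ+ ℚ) (α : List ℕ) :
      ((sortDesc α).map f).prod = (α.map f).prod :=
    ((List.perm_insertionSort _ α).map f).prod_eq
  constructor
  · rw [pProd, prod_map_eq_sum_refinements pS_eq_signedCompositionSum_XPath]
    simp only [XPaths_eq_prod, prod_sortDesc]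
  · rw [XPaths_eq_prod, prod_map_eq_sum_refinements XPath_eq_signedCompositionSum_pS]
    simp only [pProd, prod_sortDesc]

/-- **Proposition.** For every partition `λ`:
`p_λ = ∑_{α ≼ λ} (-1)^{|λ| - ℓ(α)} X_{P_{α̃}}` and
`X_{P_λ} = ∑_{α ≼ λ} (-1)^{|λ| - ℓ(α)} p_{α̃}`, the sums over all refinements `α` of `λ`. -/
theorem path_basis_power_sum_expansions
    (l : List ℕ) (hsort : l.Pairwise (· ≥ ·)) (hpos : ∀ x ∈ l, 0 < x) :
    pProd l =
      ((refinements l).map fun α =>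
        ((-1 : ℚ) ^ (l.sum - α.length)) • XPaths (sortDesc α)).sum ∧
    XPaths l =
      ((refinements l).map fun α =>
        ((-1 : ℚ) ^ (l.sum - α.length)) • pProd (sortDesc α)).sum :=
  path_basis_power_sum_expansions_general l

end CSF
end
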